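/- The generating function Σ_{n≥0} a_{s,t}(n) x^n, for gcd(s,t)=1, equals (1 − x^{s+t}) / (1 − x^{s+t} − Σ_{r=0}^{s−1} x^{m_r}), where m_r = r + ⌈(r·t+1)/s⌉; equivalently, (1 − x^{s+t} − Σ_{r=0}^{s−1} x^{m_r}) · Σ_{n≥0} a_{s,t}(n) x^n = 1 − x^{s+t} as an identity of formal power series. -/

import Mathlib

/-- `l` is a composition of `n`: a list of positive integers summing to `n`. -/
def IsComposition (n : ℕ) (l : List ℕ) : Prop := (∀ x ∈ l, 0 < x) ∧ l.sum = n

/-- The scaled Arndt condition: `s * c_{2i-1} > t * c_{2i}` for each pair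
(0-indexed: `s * l[2i] > t * l[2i+1]`). -/
def ArndtCond (s t : ℕ) (l : List ℕ) : Prop :=
  ∀ i : ℕ, 2 * i + 1 < l.length → t * l[2 * i + 1]! < s * l[2 * i]!

/-- `a_{s,t}(n)`: the number of scaled Arndt compositions of `n`. -/
noncomputable def arndtCount (s t n : ℕ) : ℕ :=
  Nat.card {l : List ℕ // IsComposition n l ∧ ArndtCond s t l}

/-- Number of compositions of `n` with all parts in the set `A`. -/
noncomputable def compCount (A : Set ℕ) (n : ℕ) : ℕ :=
  Nat.card {l : List ℕ // IsComposition n l ∧ ∀ x ∈ l, x ∈ A}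

/-!
An Arndt composition of `n > 0` is either `[n]` or a pair `(a, b)` with `t b < s a` followed by an
Arndt composition of `n - a - b`. Hence `A = 1/(1 - X) + P A`, where `A` is the generating function
and `P = ∑ₘ #{(a, b) : a + b = m, 0 < b, t b < s a} Xᵐ`. Such a pair is determined by `b`, which
ranges over `0 < b < ⌈s m/(s + t)⌉`, so `P = Q - X/(1 - X)` with `Q = ∑ₙ ⌈s n/(s + t)⌉ Xⁿ`.
Finally `m_r ≤ n ↔ r < ⌈s n/(s + t)⌉`, and `⌈s n/(s + t)⌉` grows by exactly `s` when `n` grows by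
`s + t`, so `∑_{r<s} X^{m_r} = (1 - X)(1 - X^{s+t}) Q`. Eliminating `P` and `Q` gives the theorem.
-/

open Finset PowerSeries

theorem Nat.lt_ceilDiv_iff_mul_lt {d : ℕ} (hd : 0 < d) (k r : ℕ) : r < k ⌈/⌉ d ↔ d * r < k := by
  rw [← not_le, ceilDiv_le_iff_le_mul hd, not_le]

theorem Nat.add_mul_ceilDiv {d : ℕ} (hd : 0 < d) (k c : ℕ) :
    (k + d * c) ⌈/⌉ d = k ⌈/⌉ d + c := by
  rw [ceilDiv_eq_add_pred_div, ceilDiv_eq_add_pred_div,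
    show k + d * c + d - 1 = k + d - 1 + d * c by omega, Nat.add_mul_div_left _ _ hd]

theorem Nat.add_ceilDiv_le_iff_mul_lt {s : ℕ} (hs : 0 < s) (t r n : ℕ) :
    r + (r * t + 1) ⌈/⌉ s ≤ n ↔ (s + t) * r < s * n := by
  rcases le_or_gt r n with hrn | hnr
  · obtain ⟨k, rfl⟩ := Nat.exists_eq_add_of_le hrn
    rw [Nat.add_le_add_iff_left, ceilDiv_le_iff_le_mul hs]
    constructor <;> intro h <;> nlinarith
  · constructor
    · intro h; omega
    · intro h; nlinarith

theorem isComposition_zero_iff {l : List ℕ} : IsComposition 0 l ↔ l = [] := by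
  refine ⟨fun ⟨hpos, hsum⟩ => ?_, fun h => by simp [h, IsComposition]⟩
  rw [List.sum_eq_zero_iff] at hsum
  exact List.eq_nil_iff_forall_not_mem.2 fun x hx => (hpos x hx).ne' (hsum x hx)

instance (n : ℕ) (p : List ℕ → Prop) : Finite {l : List ℕ // IsComposition n l ∧ p l} :=
  Finite.of_injective (fun l => (⟨l.1, fun hi => l.2.1.1 _ hi, l.2.1.2⟩ : Composition n))
    fun _ _ h => Subtype.ext (congrArg Composition.blocks h)

section Arndt

variable {s t : ℕ}

theorem arndtCond_singleton (a : ℕ) : ArndtCond s t [a] :=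
  fun _ hi => by simp at hi

theorem arndtCond_cons_cons {a b : ℕ} {l : List ℕ} :
    ArndtCond s t (a :: b :: l) ↔ t * b < s * a ∧ ArndtCond s t l := by
  have shift (j : ℕ) : 2 * (j + 1) = 2 * j + 1 + 1 := by ring
  refine ⟨fun h => ⟨by simpa using h 0 (by simp), fun j hj => ?_⟩, fun ⟨hab, hl⟩ i hi => ?_⟩
  · simpa [shift] using h (j + 1) (by simp; omega)
  · rcases i with _ | j
    · simpa using hab
    · simpa [shift] using hl j (by simp at hi; omega)

variable (s t) in
abbrev ArndtComposition (n : ℕ) : Type := {l : List ℕ // IsComposition n l ∧ ArndtCond s t l}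

theorem arndtCount_zero : arndtCount s t 0 = 1 :=
  Nat.card_eq_one_iff_exists.2 ⟨⟨[], isComposition_zero_iff.2 rfl, fun _ hi => by simp at hi⟩,
    fun l => Subtype.ext (isComposition_zero_iff.1 l.2.1)⟩

variable (s t) in
def arndtPairs (m : ℕ) : Finset (ℕ × ℕ) :=
  (antidiagonal m).filter fun x => 0 < x.2 ∧ t * x.2 < s * x.1

theorem mem_arndtPairs {m : ℕ} {x : ℕ × ℕ} :
    x ∈ arndtPairs s t m ↔ x.1 + x.2 = m ∧ 0 < x.2 ∧ t * x.2 < s * x.1 := by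
  simp [arndtPairs]

theorem card_arndtPairs_zero : #(arndtPairs s t 0) = 0 := by
  simp [arndtPairs]

theorem image_snd_arndtPairs (hst : 0 < s + t) (m : ℕ) :
    (arndtPairs s t m).image Prod.snd = Ioo 0 ((s * m) ⌈/⌉ (s + t)) := by
  ext b
  simp only [mem_image, mem_arndtPairs, Prod.exists, exists_eq_right, mem_Ioo,
    Nat.lt_ceilDiv_iff_mul_lt hst]
  constructor
  · rintro ⟨a, rfl, hb, hba⟩
    exact ⟨hb, by nlinarith⟩
  · rintro ⟨hb, hbm⟩
    have hbm' : b < m := Nat.lt_of_mul_lt_mul_left (a := s) (by nlinarith)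
    obtain ⟨a, rfl⟩ : ∃ a, m = a + b := ⟨m - b, by omega⟩
    exact ⟨a, rfl, hb, by nlinarith⟩

theorem card_arndtPairs (hst : 0 < s + t) (m : ℕ) :
    #(arndtPairs s t m) = (s * m) ⌈/⌉ (s + t) - 1 := by
  rw [← Nat.sub_zero ((s * m) ⌈/⌉ (s + t)), ← Nat.card_Ioo, ← image_snd_arndtPairs hst,
    card_image_of_injOn]
  rintro ⟨a, b⟩ hab ⟨a', b'⟩ hab' (rfl : b = b')
  have := (mem_arndtPairs.1 hab).1
  have := (mem_arndtPairs.1 hab').1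
  simp only [Prod.mk.injEq, and_true]
  omega

variable (s t) in
def consArndtPair {n : ℕ} (hn : n ≠ 0) :
    Option (Σ p : antidiagonal n, arndtPairs s t p.1.1 × ArndtComposition s t p.1.2) →
      ArndtComposition s t n
  | none => ⟨[n], ⟨by simp [IsComposition, Nat.pos_of_ne_zero hn], arndtCond_singleton n⟩⟩
  | some ⟨⟨(i, j), hij⟩, ⟨(a, b), hab⟩, l⟩ =>
    have hij : i + j = n := HasAntidiagonal.mem_antidiagonal.1 hij
    have hab : a + b = i ∧ 0 < b ∧ t * b < s * a := mem_arndtPairs.1 hab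
    have ha : 0 < a := Nat.pos_of_mul_pos_left (lt_of_le_of_lt (Nat.zero_le _) hab.2.2)
    ⟨a :: b :: l.1, ⟨by simpa [ha, hab.2.1] using l.2.1.1, by
        rw [List.sum_cons, List.sum_cons, l.2.1.2]; show a + (b + j) = n; omega⟩,
      arndtCond_cons_cons.2 ⟨hab.2.2, l.2.2⟩⟩

theorem consArndtPair_bijective {n : ℕ} (hn : n ≠ 0) :
    Function.Bijective (consArndtPair s t hn) := by
  constructor
  · rintro (_ | ⟨⟨⟨i, j⟩, hij⟩, ⟨⟨a, b⟩, hab⟩, l⟩) (_ | ⟨⟨⟨i', j'⟩, hij'⟩, ⟨⟨a', b'⟩, hab'⟩, l'⟩) h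
      <;> have h := congrArg Subtype.val h <;> simp [consArndtPair] at h
    · rfl
    · obtain ⟨rfl, rfl, hl⟩ := h
      rw [HasAntidiagonal.mem_antidiagonal] at hij hij'
      obtain ⟨rfl, -⟩ := mem_arndtPairs.1 hab
      obtain ⟨rfl, -⟩ := mem_arndtPairs.1 hab'
      obtain rfl : j = j' := by omega
      obtain rfl := Subtype.ext hl
      rfl
  · rintro ⟨_ | ⟨a, _ | ⟨b, l⟩⟩, ⟨hpos, hsum⟩, hl⟩
    · exact absurd hsum.symm (by simpa using hn)
    · obtain rfl : a = n := by simpa using hsum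
      exact ⟨none, rfl⟩
    · obtain ⟨hba, hl⟩ := arndtCond_cons_cons.1 hl
      simp only [List.mem_cons, forall_eq_or_imp, List.sum_cons] at hpos hsum
      refine ⟨some ⟨⟨(a + b, l.sum), by simp [← hsum, add_assoc]⟩,
        ⟨(a, b), mem_arndtPairs.2 ⟨rfl, hpos.2.1, hba⟩⟩, ⟨l, ⟨hpos.2.2, rfl⟩, hl⟩⟩, rfl⟩

theorem arndtCount_eq_one_add {n : ℕ} (hn : n ≠ 0) :
    arndtCount s t n = 1 + ∑ p ∈ antidiagonal n, #(arndtPairs s t p.1) * arndtCount s t p.2 := by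
  rw [arndtCount, ← Nat.card_congr (Equiv.ofBijective _ (consArndtPair_bijective hn)),
    Finite.card_option, Nat.card_sigma, ← sum_coe_sort (antidiagonal n), add_comm]
  simp only [Nat.card_prod, Nat.card_eq_finsetCard, arndtCount]

theorem card_exponents_le_add_ceilDiv (hs : 0 < s) (n : ℕ) :
    #((range s).filter fun r => r + (r * t + 1) ⌈/⌉ s ≤ n) +
        (if s + t ≤ n then (s * (n - (s + t))) ⌈/⌉ (s + t) else 0) = (s * n) ⌈/⌉ (s + t) := by
  have hst : 0 < s + t := Nat.add_pos_left hs t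
  have hfilter : (range s).filter (fun r => r + (r * t + 1) ⌈/⌉ s ≤ n) =
      range (min s ((s * n) ⌈/⌉ (s + t))) := by
    ext r
    simp [Nat.add_ceilDiv_le_iff_mul_lt hs, Nat.lt_ceilDiv_iff_mul_lt hst]
  rw [hfilter, card_range]
  split_ifs with hn
  · obtain ⟨k, rfl⟩ := Nat.exists_eq_add_of_le' hn
    rw [Nat.add_sub_cancel, mul_add, mul_comm s (s + t), Nat.add_mul_ceilDiv hst]
    omega
  · have : (s * n) ⌈/⌉ (s + t) ≤ s := (ceilDiv_le_iff_le_mul hst).2 (by nlinarith)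
    omega

theorem mk_arndtCount_eq :
    PowerSeries.mk (fun n => (arndtCount s t n : ℤ)) =
      PowerSeries.mk 1 + PowerSeries.mk (fun m => (#(arndtPairs s t m) : ℤ)) *
        PowerSeries.mk (fun n => (arndtCount s t n : ℤ)) := by
  ext n
  rcases eq_or_ne n 0 with rfl | hn
  · simp [arndtCount_zero, card_arndtPairs_zero]
  · simp [coeff_mul, arndtCount_eq_one_add hn]

theorem mk_card_arndtPairs_add_X_mul (hs : 0 < s) :
    PowerSeries.mk (fun m => (#(arndtPairs s t m) : ℤ)) + X * PowerSeries.mk 1 =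
      PowerSeries.mk fun m => (((s * m) ⌈/⌉ (s + t) : ℕ) : ℤ) := by
  have hst : 0 < s + t := Nat.add_pos_left hs t
  ext (_ | m)
  · simp [card_arndtPairs_zero]
  · have : 0 < (s * (m + 1)) ⌈/⌉ (s + t) :=
      (Nat.lt_ceilDiv_iff_mul_lt hst _ _).2 (by simp [hs])
    simp [card_arndtPairs hst, coeff_succ_X_mul, Nat.cast_sub this]

theorem sum_X_pow_exponent_mul_mk_one (hs : 0 < s) :
    (∑ r ∈ range s, (X : ℤ⟦X⟧) ^ (r + (r * t + 1) ⌈/⌉ s)) * PowerSeries.mk 1 =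
      (1 - X ^ (s + t)) * PowerSeries.mk fun n => (((s * n) ⌈/⌉ (s + t) : ℕ) : ℤ) := by
  ext n
  rw [sum_mul, map_sum, sub_mul, one_mul, map_sub, coeff_X_pow_mul', coeff_mk,
    ← card_exponents_le_add_ceilDiv hs n]
  simp only [coeff_X_pow_mul', coeff_mk, Pi.one_apply]
  rw [sum_boole]
  split_ifs <;> push_cast <;> ring

end Arndt

open PowerSeries in
theorem arndt_generating_function_general (s t : ℕ) (hs : 0 < s) :
    (1 - (X : PowerSeries ℤ) ^ (s + t)
        - ∑ r ∈ Finset.range s, (X : PowerSeries ℤ) ^ (r + (r * t + 1) ⌈/⌉ s)) *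
      PowerSeries.mk (fun n => (arndtCount s t n : ℤ)) =
    1 - (X : PowerSeries ℤ) ^ (s + t) := by
  have hA := mk_arndtCount_eq (s := s) (t := t)
  have hP := mk_card_arndtPairs_add_X_mul (t := t) hs
  have hM := sum_X_pow_exponent_mul_mk_one (t := t) hs
  have hU := mk_one_mul_one_sub_eq_one ℤ
  set A := PowerSeries.mk fun n => (arndtCount s t n : ℤ)
  set M := ∑ r ∈ range s, (X : ℤ⟦X⟧) ^ (r + (r * t + 1) ⌈/⌉ s)
  linear_combination (1 - X ^ (s + t)) * ((1 - X * A) * hU + (1 - X) * hA + (1 - X) * A * hP)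
    - (1 - X) * A * hM + M * A * hU

open PowerSeries in
theorem arndt_generating_function (s t : ℕ) (hs : 0 < s) (ht : 0 < t)
    (hco : Nat.Coprime s t) :
    (1 - (X : PowerSeries ℤ) ^ (s + t)
        - ∑ r ∈ Finset.range s, (X : PowerSeries ℤ) ^ (r + (r * t + 1) ⌈/⌉ s)) *
      PowerSeries.mk (fun n => (arndtCount s t n : ℤ)) =
    1 - (X : PowerSeries ℤ) ^ (s + t) :=
  arndt_generating_function_general s t hs
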